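/- arXiv:1111.3305 — 5 statements merged into one kernel-verified Lean document; each statement's English description precedes it below -/
import Mathlib

section
/- Let T ≥ e^(e^33), (log log T)² ≤ V ≤ (log T)/(log log T), η = 1/log V, and k = ⌊2V/(3(1+η))⌋. Then k·(log(k·log log T) − 2·log(ηV)) ≤ −(2/3)·V·log(V/log log T) + (4/3)·V·log log V + (2/3)·V. -/
open Real

set_option maxHeartbeats 1000000 in
theorem stmt0 (T V η : ℝ) (k : ℤ)
    (hT : Real.exp (Real.exp 33) ≤ T)
    (hV1 : (Real.log (Real.log T))^2 ≤ V)
    (hV2 : V ≤ Real.log T / Real.log (Real.log T))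
    (hη : η = 1 / Real.log V)
    (hk : k = ⌊2 * V / (3 * (1 + η))⌋) :
    (k : ℝ) * (Real.log ((k : ℝ) * Real.log (Real.log T)) - 2 * Real.log (η * V))
      ≤ -(2/3) * V * Real.log (V / Real.log (Real.log T))
        + (4/3) * V * Real.log (Real.log V) + (2/3) * V := by
  have hlogT : Real.exp 33 ≤ Real.log T := by
    calc Real.exp 33 = Real.log (Real.exp (Real.exp 33)) := (Real.log_exp _).symm
      _ ≤ Real.log T := by
          gcongr

  set L := Real.log (Real.log T) with hLdef
  have hL : 33 ≤ L := by
    rw [hLdef, Real.le_log_iff_exp_le (lt_of_lt_of_le (Real.exp_pos 33) hlogT)]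
    exact hlogT
  have hLpos : 0 < L := by linarith
  have hV : 1089 ≤ V := by nlinarith
  have hVpos : 0 < V := by linarith
  have hexp1 : Real.exp 1 < 2.7182818286 := Real.exp_one_lt_d9
  have he0 : 0 < Real.exp 1 := Real.exp_pos 1
  have hexp6 : Real.exp 6 ≤ 1089 := by
    have h6 : Real.exp 6 = (Real.exp 1)^6 := by
      rw [← Real.exp_nat_mul]; norm_num
    have h : (Real.exp 1)^6 ≤ (2.7182818286:ℝ)^6 := by
      apply pow_le_pow_left₀ he0.le hexp1.le
    rw [h6]
    calc (Real.exp 1)^6 ≤ (2.7182818286:ℝ)^6 := h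
      _ ≤ 1089 := by norm_num
  have hlv6 : 6 ≤ Real.log V := by
    rw [Real.le_log_iff_exp_le hVpos]; linarith
  set lv := Real.log V with hlvdef
  have hlvpos : 0 < lv := by linarith
  set llv := Real.log lv with hllvdef
  have hllv0 : 0 ≤ llv := Real.log_nonneg (by linarith)
  have hlogL0 : 0 ≤ Real.log L := Real.log_nonneg (by linarith)
  have hηpos : 0 < η := by rw [hη]; positivity
  have hη6 : η ≤ 1/6 := by
    rw [hη]
    exact one_div_le_one_div_of_le (by norm_num) hlv6
  have hηlv : η * lv = 1 := by
    rw [hη]; field_simp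
  -- floor bounds
  have hD : (0:ℝ) < 3 * (1 + η) := by positivity
  have hk1 : (k:ℝ) ≤ 2 * V / (3 * (1 + η)) := by
    rw [hk]; exact Int.floor_le _
  have hk2 : 2 * V / (3 * (1 + η)) < (k:ℝ) + 1 := by
    rw [hk]; push_cast; exact Int.lt_floor_add_one _
  have hk1' : (k:ℝ) * (3 * (1 + η)) ≤ 2 * V := (le_div_iff₀ hD).mp hk1
  have hk2' : 2 * V < ((k:ℝ) + 1) * (3 * (1 + η)) := (div_lt_iff₀ hD).mp hk2
  have hk0 : 0 < (k:ℝ) + 1 := by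
    by_contra h
    push_neg at h
    nlinarith [hk2', hVpos, hηpos]
  have hklb : 4 * V / 7 - 1 ≤ (k:ℝ) := by
    nlinarith [hk2', hk0, hη6, hηpos]
  have hkpos : 0 < (k:ℝ) := by linarith
  have hk23 : 3 * (k:ℝ) ≤ 2 * V := by
    nlinarith [hk1', mul_pos hkpos hηpos]
  -- log k upper bound
  have hlk : Real.log (k:ℝ) ≤ lv - Real.log (3/2) := by
    have h1 : Real.log (k:ℝ) ≤ Real.log (2 * V / 3) := by
      gcongr <;> linarith
    have h2 : (2 * V / 3 : ℝ) = ((3:ℝ)/2)⁻¹ * V := by ring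
    rw [h2, Real.log_mul (by norm_num) (ne_of_gt hVpos), Real.log_inv] at h1
    linarith
  -- log(3/2) > 2/5
  have hlog32 : (2:ℝ)/5 < Real.log (3/2) := by
    have hexp2 : Real.exp 2 = (Real.exp 1)^2 := by
      rw [← Real.exp_nat_mul]; norm_num
    have h5 : (Real.exp (2/5))^5 = Real.exp 2 := by
      rw [← Real.exp_nat_mul]; norm_num
    by_contra hcon
    push_neg at hcon
    have h32 : (3:ℝ)/2 ≤ Real.exp (2/5) := by
      have := Real.exp_le_exp.mpr hcon
      rwa [Real.exp_log (by norm_num : (0:ℝ) < 3/2)] at this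
    have hp : ((3:ℝ)/2)^5 ≤ (Real.exp (2/5))^5 :=
      pow_le_pow_left₀ (by norm_num) h32 5
    rw [h5, hexp2] at hp
    have hpp : (Real.exp 1)^2 ≤ (2.7182818286:ℝ)^2 := pow_le_pow_left₀ he0.le hexp1.le 2
    nlinarith [hp, hpp]
  -- lv ≤ 2V/33
  have hlvub : lv ≤ 2 * V / 33 := by
    have hsp : 0 < Real.sqrt V := Real.sqrt_pos.mpr hVpos
    have hs : Real.log (Real.sqrt V) ≤ Real.sqrt V - 1 :=
      Real.log_le_sub_one_of_pos hsp
    have hls : Real.log (Real.sqrt V) = lv / 2 := by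
      rw [Real.log_sqrt hVpos.le]
    have hsq : Real.sqrt V * Real.sqrt V = V := Real.mul_self_sqrt hVpos.le
    have h33 : 33 ≤ Real.sqrt V := by
      nlinarith [Real.sqrt_nonneg V, hsq]
    rw [hls] at hs
    nlinarith [hs, hsq, h33]
  -- rewrite logs in the goal
  rw [Real.log_mul (ne_of_gt hkpos) (ne_of_gt hLpos),
      Real.log_mul (ne_of_gt hηpos) (ne_of_gt hVpos),
      Real.log_div (ne_of_gt hVpos) (ne_of_gt hLpos),
      hη, one_div, Real.log_inv]
  -- now the goal is in terms of log k, log L, llv, lv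
  have hbr : Real.log (k:ℝ) + Real.log L + (-llv + lv) * (-2)
      ≤ (Real.log L + 2 * llv - lv + 1) - (1 + Real.log (3/2)) := by linarith
  have hstep : (k:ℝ) * (Real.log (k:ℝ) + Real.log L - 2 * (-llv + lv))
      ≤ (k:ℝ) * ((Real.log L + 2 * llv - lv + 1) - (1 + Real.log (3/2))) := by
    apply mul_le_mul_of_nonneg_left _ hkpos.le
    linarith
  have main : (k:ℝ) * ((Real.log L + 2 * llv - lv + 1) - (1 + Real.log (3/2)))
      ≤ 2/3 * V * (Real.log L + 2 * llv - lv + 1) := by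
    set S := Real.log L + 2 * llv - lv + 1 with hS
    rcases le_or_gt 0 S with h | h
    · nlinarith [mul_le_mul_of_nonneg_right (show (k:ℝ) ≤ 2/3 * V by linarith) h,
        mul_pos hkpos (show (0:ℝ) < 1 + Real.log (3/2) by linarith)]
    · have hmS : -S ≤ lv := by rw [hS]; linarith
      have hVk1 : 2/3 * V - (k:ℝ) ≤ 1 + η + 2/3 * V * η := by
        nlinarith [hk2',
          mul_le_mul_of_nonneg_right (show (k:ℝ) ≤ 2/3 * V by linarith) hηpos.le]
      have hVk0 : 0 ≤ 2/3 * V - (k:ℝ) := by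
        nlinarith [hk1', mul_pos hkpos hηpos]
      have h2 : (2/3 * V - (k:ℝ)) * (-S) ≤ (2/3 * V - (k:ℝ)) * lv :=
        mul_le_mul_of_nonneg_left hmS hVk0
      have h3 : (2/3 * V - (k:ℝ)) * lv ≤ (1 + η + 2/3 * V * η) * lv :=
        mul_le_mul_of_nonneg_right hVk1 hlvpos.le
      have h4 : (1 + η + 2/3 * V * η) * lv = lv + 1 + 2/3 * V := by
        linear_combination (1 + 2/3 * V) * hηlv
      have h5 : lv + 1 + 2/3 * V ≤ (k:ℝ) * (7/5) := by linarith
      have h6 : (k:ℝ) * (7/5) ≤ (k:ℝ) * (1 + Real.log (3/2)) :=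
        mul_le_mul_of_nonneg_left (by linarith) hkpos.le
      nlinarith [h2, h3, h4, h5, h6]
  linarith [hstep, main]
end

section
/- Let A, C > 0 with A ≥ 4C⁴ + 1. Then for all real V > e^(3C/2), one has A·V − (2/3)·V·log V + C·V·log log V ≤ e^(3A/2)·((3/2)·A)^(3C/2). -/
/-!
Put `x = log V` and `X = 3A/2 + (3C/2) log (3A/2)`, so that the left side is
`eˣ (A - 2x/3 + C log x)` and the right side is `e^X`. Replacing `log x` by its tangent line at `X`
bounds the bracket by an affine function `b - a x` with slope `a = 2/3 - C/X`, and
`eˣ (b - a x) ≤ a e^y` as soon as `b ≤ a (y + 1)`, by `1 + t ≤ eᵗ`. With `y = X + 1/3` the factor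
`a e^{1/3} ≤ (2/3)(3/2)` is harmless, and `b ≤ a (X + 4/3)` reduces to
`9 C² log (3A/2) + 8 C ≤ 8 A`, which follows from `A ≥ 4C⁴ + 1` via `log A ≤ 4 (A^{1/4} - 1)`.
-/

open Real

lemma Real.log_le_log_add_div_sub_one {x y : ℝ} (hx : 0 < x) (hy : 0 < y) :
    log x ≤ log y + x / y - 1 := by
  have := log_le_sub_one_of_pos (div_pos hx hy)
  rw [log_div hx.ne' hy.ne'] at this
  linarith

lemma Real.exp_mul_sub_le {a b x y : ℝ} (ha : 0 ≤ a) (h : b ≤ a * (y + 1)) :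
    exp x * (b - a * x) ≤ a * exp y :=
  calc exp x * (b - a * x) ≤ exp x * (a * exp (y - x)) := by
        gcongr
        nlinarith [add_one_le_exp (y - x)]
    _ = a * exp y := by rw [mul_left_comm, ← exp_add, add_sub_cancel]

lemma Real.exp_one_third_le : exp (1 / 3) ≤ 3 / 2 := by
  have := exp_bound_div_one_sub_of_interval' (x := 1 / 3) (by norm_num) (by norm_num)
  norm_num at this ⊢
  exact this.le

lemma exp_mul_sub_add_mul_log_le_of_tangent {A C X x : ℝ} (hC : 0 ≤ C) (hX : 0 < X)
    (hx : 0 < x) (hCX : C / X ≤ 2 / 3)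
    (htan : C * log X + 4 / 3 * (C / X) ≤ 2 / 3 * X - A + 8 / 9) :
    exp x * (A - 2 / 3 * x + C * log x) ≤ exp X := by
  set a := 2 / 3 - C / X with ha
  have hline : A - 2 / 3 * x + C * log x ≤ (A - C + C * log X) - a * x := by
    have := mul_le_mul_of_nonneg_left (log_le_log_add_div_sub_one hx hX) hC
    rw [ha, mul_sub, mul_add, mul_div_assoc', mul_div_right_comm] at *
    linarith
  have hslope : a * ((X + 1 / 3) + 1) = 2 / 3 * X + 8 / 9 - C - 4 / 3 * (C / X) := by
    rw [ha]
    field_simp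
    ring
  calc exp x * (A - 2 / 3 * x + C * log x)
      ≤ exp x * ((A - C + C * log X) - a * x) := by gcongr
    _ ≤ a * exp (X + 1 / 3) := exp_mul_sub_le (by linarith) (by linarith)
    _ ≤ 2 / 3 * (exp X * (3 / 2)) := by
        rw [exp_add]
        gcongr
        · linarith [div_nonneg hC hX.le]
        · exact exp_one_third_le
    _ = exp X := by ring

lemma sq_mul_log_le {A C : ℝ} (hAC : 4 * C ^ 4 + 1 ≤ A) :
    9 * C ^ 2 * log (3 / 2 * A) + 8 * C ≤ 8 * A := by
  have hA : 1 ≤ A := by nlinarith [pow_nonneg (sq_nonneg C) 2]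
  set t := A ^ (1 / 4 : ℝ)
  have ht4 : t ^ 4 = A := by
    rw [← rpow_natCast, ← rpow_mul (by linarith)]
    norm_num
  have ht : 1 ≤ t := one_le_rpow hA (by norm_num)
  have hlog : log (3 / 2 * A) ≤ 1 / 2 + 4 * (t - 1) := by
    have h32 : log (3 / 2) ≤ 1 / 2 := by
      rw [log_le_iff_le_exp (by norm_num)]
      linarith [add_one_le_exp (1 / 2 : ℝ)]
    rw [log_mul (by norm_num) (by linarith), ← ht4, log_pow]
    linarith [log_le_sub_one_of_pos (show 0 < t by linarith)]
  have hpoly : 9 * C ^ 2 * (1 / 2 + 4 * (t - 1)) + 8 * C ≤ 8 * t ^ 4 := by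
    nlinarith [sq_nonneg (t ^ 2 - 2 * C ^ 2), sq_nonneg (2 * C ^ 2 - t), sq_nonneg (C - 1)]
  rw [ht4] at hpoly
  nlinarith [sq_nonneg C]

lemma exp_mul_sub_add_mul_log_le {A C x : ℝ} (hC : 0 ≤ C) (hAC : 4 * C ^ 4 + 1 ≤ A)
    (hx : 0 < x) :
    exp x * (A - 2 / 3 * x + C * log x) ≤ exp (3 / 2 * A + 3 / 2 * C * log (3 / 2 * A)) := by
  set L := log (3 / 2 * A)
  set X := 3 / 2 * A + 3 / 2 * C * L with hXdef
  have hA : 1 ≤ A := by nlinarith [pow_nonneg (sq_nonneg C) 2]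
  have hCA : C ≤ A := by nlinarith [sq_nonneg (2 * C ^ 2 - 1 / 2), sq_nonneg (C - 1 / 2)]
  have hL : 0 ≤ L := log_nonneg (by linarith)
  have hAX : 3 / 2 * A ≤ X := le_add_of_nonneg_right (by positivity)
  have hX : 0 < X := by linarith
  have hCX : C / X ≤ 2 / 3 * (C / A) :=
    calc C / X ≤ C / (3 / 2 * A) := div_le_div_of_nonneg_left hC (by linarith) hAX
      _ = 2 / 3 * (C / A) := by field_simp
  have hlogX : log X ≤ L + C * L / A := by
    have := log_le_log_add_div_sub_one hX (show 0 < 3 / 2 * A by linarith)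
    have hq : X / (3 / 2 * A) - 1 = C * L / A := by
      field_simp
      ring
    linarith
  have hsmall : C * (C * L / A) + 8 / 9 * (C / A) ≤ 8 / 9 := by
    have hsum : C * (C * L / A) + 8 / 9 * (C / A) = (9 * C ^ 2 * L + 8 * C) / (9 * A) := by
      field_simp
    rw [hsum, div_le_iff₀ (by linarith)]
    linarith [sq_mul_log_le hAC]
  refine exp_mul_sub_add_mul_log_le_of_tangent hC hX hx ?_ ?_
  · linarith [(div_le_one₀ (by linarith)).2 hCA]
  · calc C * log X + 4 / 3 * (C / X) ≤ C * (L + C * L / A) + 4 / 3 * (2 / 3 * (C / A)) := by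
          gcongr
      _ ≤ 2 / 3 * X - A + 8 / 9 := by linarith

theorem stmt1_general (A C : ℝ) (hC : 0 < C) (hAC : 4 * C^4 + 1 ≤ A) :
    ∀ V : ℝ, Real.exp (3 * C / 2) < V →
      A * V - (2/3) * V * Real.log V + C * V * Real.log (Real.log V)
        ≤ Real.exp (3 * A / 2) * ((3/2) * A) ^ ((3 : ℝ) * C / 2) := by
  intro V hV
  have hV0 : 0 < V := (exp_pos _).trans hV
  have hx : 0 < log V := by linarith [(lt_log_iff_exp_lt hV0).2 hV]
  have hRHS : exp (3 * A / 2) * (3 / 2 * A) ^ (3 * C / 2)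
      = exp (3 / 2 * A + 3 / 2 * C * log (3 / 2 * A)) := by
    rw [rpow_def_of_pos (by nlinarith [pow_nonneg (sq_nonneg C) 2]), ← exp_add]
    ring_nf
  calc A * V - 2 / 3 * V * log V + C * V * log (log V)
      = exp (log V) * (A - 2 / 3 * log V + C * log (log V)) := by rw [exp_log hV0]; ring
    _ ≤ _ := exp_mul_sub_add_mul_log_le hC.le hAC hx
    _ = _ := hRHS.symm

theorem stmt1 (A C : ℝ) (hA : 0 < A) (hC : 0 < C) (hAC : 4 * C^4 + 1 ≤ A) :
    ∀ V : ℝ, Real.exp (3 * C / 2) < V →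
      A * V - (2/3) * V * Real.log V + C * V * Real.log (Real.log V)
        ≤ Real.exp (3 * A / 2) * ((3/2) * A) ^ ((3 : ℝ) * C / 2) :=
  stmt1_general A C hC hAC
end

section
/- There is an absolute constant C > 0 such that for every real u ≥ 2, the sum ∑_{2 ≤ n ≤ u} Λ(n)/(√n · log n) ≤ C·√u/log u, where Λ is the von Mangoldt function. -/
/-!
Chebyshev's bound `ψ x = O(x)` gives `∑_{n ≤ N} Λ(n) / √n = O(√N)` by induction from `N / 4`
to `N`. Split the sum at `√u`: beyond `√u` we have `log n ≥ (log u) / 2`, so that part is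
`O(√u / log u)`; below `√u` we only use `log n ≥ log 2`, and the resulting `O(u^{1/4})` is
`O(√u / log u)` because `log u ≤ 4 u^{1/4}`.
-/

open ArithmeticFunction hiding log
open Finset Real Chebyshev

theorem sum_Ioc_div_sqrt_le_of_sum_Ioc_le {a : ℕ → ℝ} {c : ℝ} (ha : ∀ n, 0 ≤ a n)
    (hc : ∀ m : ℕ, ∑ n ∈ Ioc 0 m, a n ≤ c * m) (N : ℕ) :
    ∑ n ∈ Ioc 0 N, a n / √n ≤ 4 * c * √N := by
  have hc0 : 0 ≤ c := by simpa using (ha 1).trans (by simpa using hc 1)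
  induction N using Nat.strong_induction_on with
  | _ N ih =>
    rcases N.eq_zero_or_pos with rfl | hN0
    · simp
    set M := N / 4
    have hM : 2 * √M ≤ √N := by
      rw [show (2 : ℝ) = √4 by norm_num, ← sqrt_mul (by norm_num)]
      exact sqrt_le_sqrt (by exact_mod_cast (by omega : 4 * M ≤ N))
    have hN : √N ≤ 2 * √(M + 1) := by
      rw [show (2 : ℝ) = √4 by norm_num, ← sqrt_mul (by norm_num)]
      exact sqrt_le_sqrt (by norm_cast; omega)
    have hM1 : 0 < √(M + 1) := sqrt_pos.2 (by positivity)
    have tail : ∑ n ∈ Ioc M N, a n / √n ≤ c * N / √(M + 1) := by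
      calc ∑ n ∈ Ioc M N, a n / √n ≤ ∑ n ∈ Ioc M N, a n / √(M + 1) := by
            refine sum_le_sum fun n hn => div_le_div_of_nonneg_left (ha n) hM1 ?_
            exact sqrt_le_sqrt (by exact_mod_cast (mem_Ioc.1 hn).1)
        _ ≤ ∑ n ∈ Ioc 0 N, a n / √(M + 1) :=
            sum_le_sum_of_subset_of_nonneg (Ioc_subset_Ioc_left (Nat.zero_le M))
              fun n _ _ => div_nonneg (ha n) hM1.le
        _ ≤ c * N / √(M + 1) := by
            rw [← sum_div]; exact div_le_div_of_nonneg_right (hc N) hM1.le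
    calc ∑ n ∈ Ioc 0 N, a n / √n
        = ∑ n ∈ Ioc 0 M, a n / √n + ∑ n ∈ Ioc M N, a n / √n :=
          (sum_Ioc_consecutive _ (Nat.zero_le M) (Nat.div_le_self N 4)).symm
      _ ≤ 4 * c * √M + c * N / √(M + 1) := add_le_add (ih M (by omega)) tail
      _ ≤ 4 * c * √N := by
          have hhead : 4 * c * √M ≤ 2 * c * √N := by nlinarith
          have htail : c * N / √(M + 1) ≤ 2 * c * √N := by
            rw [div_le_iff₀ hM1]
            calc c * N = c * √N * √N := by rw [mul_assoc, mul_self_sqrt (Nat.cast_nonneg N)]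
              _ ≤ c * √N * (2 * √(M + 1)) := by gcongr
              _ = 2 * c * √N * √(M + 1) := by ring
          linarith

theorem sum_Ioc_vonMangoldt_div_sqrt_le (N : ℕ) :
    ∑ n ∈ Ioc 0 N, Λ n / √n ≤ 4 * (log 4 + 4) * √N := by
  refine sum_Ioc_div_sqrt_le_of_sum_Ioc_le (fun _ => vonMangoldt_nonneg) (fun N => ?_) N
  simpa [psi] using psi_le_const_mul_self (Nat.cast_nonneg N)

theorem sum_Ioc_vonMangoldt_div_sqrt_mul_log_le {m N : ℕ} {L : ℝ} (hL : 0 < L)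
    (hlog : ∀ n ∈ Ioc m N, L ≤ log n) :
    ∑ n ∈ Ioc m N, Λ n / (√n * log n) ≤ 4 * (log 4 + 4) * √N / L := by
  calc ∑ n ∈ Ioc m N, Λ n / (√n * log n) ≤ ∑ n ∈ Ioc m N, Λ n / √n / L := by
        refine sum_le_sum fun n hn => ?_
        rw [div_div]
        have hn0 : (0 : ℝ) < n := by exact_mod_cast (Nat.zero_le m).trans_lt (mem_Ioc.1 hn).1
        exact div_le_div_of_nonneg_left vonMangoldt_nonneg (by positivity)
          (mul_le_mul_of_nonneg_left (hlog n hn) (sqrt_nonneg n))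
    _ ≤ ∑ n ∈ Ioc 0 N, Λ n / √n / L :=
        sum_le_sum_of_subset_of_nonneg (Ioc_subset_Ioc_left (Nat.zero_le m))
          fun n _ _ => by positivity
    _ ≤ 4 * (log 4 + 4) * √N / L := by
        rw [← sum_div]
        exact div_le_div_of_nonneg_right (sum_Ioc_vonMangoldt_div_sqrt_le N) hL.le

theorem sqrt_sqrt_mul_log_le {u : ℝ} (hu : 0 ≤ u) : √√u * log u ≤ 4 * √u := by
  have hlog : log u = 4 * log √√u := by
    rw [log_sqrt (sqrt_nonneg u), log_sqrt hu]; ring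
  calc √√u * log u = 4 * (√√u * log √√u) := by rw [hlog]; ring
    _ ≤ 4 * (√√u * √√u) := by gcongr; exact log_le_self (sqrt_nonneg _)
    _ = 4 * √u := by rw [mul_self_sqrt (sqrt_nonneg u)]

theorem stmt6 :
    ∃ C : ℝ, 0 < C ∧ ∀ u : ℝ, 2 ≤ u →
      ∑ n ∈ Finset.Icc 2 ⌊u⌋₊, Λ n / (Real.sqrt n * Real.log n)
        ≤ C * Real.sqrt u / Real.log u := by
  refine ⟨(4 / log 2 + 2) * (4 * (log 4 + 4)), by positivity, fun u hu => ?_⟩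
  set c := 4 * (log 4 + 4)
  set M := ⌊√u⌋₊
  have hlogu : 0 < log u := log_pos (by linarith)
  have hM1 : 1 ≤ M := Nat.le_floor (by simpa using one_le_sqrt.2 (by linarith))
  have hMN : M ≤ ⌊u⌋₊ := Nat.floor_le_floor (sqrt_le_self_iff.2 (.inr (by linarith)))
  have small : ∑ n ∈ Ioc 1 M, Λ n / (√n * log n) ≤ c * √M / log 2 :=
    sum_Ioc_vonMangoldt_div_sqrt_mul_log_le (log_pos one_lt_two) fun n hn =>
      log_le_log two_pos (by exact_mod_cast (mem_Ioc.1 hn).1)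
  have large : ∑ n ∈ Ioc M ⌊u⌋₊, Λ n / (√n * log n) ≤ c * √⌊u⌋₊ / (log u / 2) := by
    refine sum_Ioc_vonMangoldt_div_sqrt_mul_log_le (by positivity) fun n hn => ?_
    have : √u < n := (Nat.lt_floor_add_one √u).trans_le (by exact_mod_cast (mem_Ioc.1 hn).1)
    rw [← log_sqrt (by linarith)]
    exact log_le_log (by positivity) this.le
  have hM : √M ≤ 4 * √u / log u := (sqrt_le_sqrt (Nat.floor_le (sqrt_nonneg u))).trans <|
    (le_div_iff₀ hlogu).2 (sqrt_sqrt_mul_log_le (by linarith))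
  have hN : √⌊u⌋₊ ≤ √u := sqrt_le_sqrt (Nat.floor_le (by linarith))
  rw [show Icc 2 ⌊u⌋₊ = Ioc 1 ⌊u⌋₊ from Icc_add_one_left_eq_Ioc 1 _,
    ← sum_Ioc_consecutive _ hM1 hMN]
  calc _ ≤ c * √M / log 2 + c * √⌊u⌋₊ / (log u / 2) := add_le_add small large
    _ ≤ c * (4 * √u / log u) / log 2 + c * √u / (log u / 2) := by gcongr
    _ = (4 / log 2 + 2) * c * √u / log u := by field_simp
end

section
/- Let q ≥ 2 be a natural number and χ₀ the principal Dirichlet character mod q. For every complex s with Re(s) ≥ 1/2, the sum ∑_{p | q} |log(1 − p^{-s})| over primes p dividing q is O(√(log q/log log q) + log log q), with an absolute implied constant (for q ≥ 16). -/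
/-!
Since `‖log (1 - z)‖ ≤ 3 ‖z‖` for `‖z‖ ≤ 4/5` and `‖p ^ (-s)‖ ≤ p ^ (-1/2) ≤ 1/√2`, it suffices to
bound `∑_{p ∣ q} p ^ (-1/2)`. Split the primes at `T = log q / log log q`. The primes `p ≤ T`
contribute at most `∑_{n ≤ T} n ^ (-1/2) ≤ 2 √T`. The product of the primes `p > T` divides `q`,
so there are at most `log q / log T ≤ 2 T` of them (as `log T = log log q - log log log q`
is at least `log log q / 2`), each contributing at most `T ^ (-1/2)`.
Altogether the sum is at most `4 √T`.
-/

open Finset Real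

lemma Real.log_le_half_self {x : ℝ} (hx : 0 < x) : log x ≤ x / 2 := by
  have h := log_le_sub_one_of_pos (sqrt_pos.mpr hx)
  rw [log_sqrt hx.le] at h
  nlinarith [sq_nonneg (√x - 2), sq_sqrt hx.le]

lemma Complex.norm_log_one_sub_le_three_mul {z : ℂ} (hz : ‖z‖ ≤ 4 / 5) :
    ‖log (1 - z)‖ ≤ 3 * ‖z‖ := by
  have h := norm_log_one_add_le (z := -z) (by rw [norm_neg]; linarith)
  rw [norm_neg, ← sub_eq_add_neg] at h
  have hinv : (1 - ‖z‖)⁻¹ ≤ 5 := by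
    rw [inv_le_comm₀ (by linarith) (by norm_num)]
    linarith
  nlinarith [norm_nonneg z]

lemma norm_natCast_cpow_neg_le_inv_sqrt {p : ℕ} (hp : 0 < p) {s : ℂ} (hs : 1 / 2 ≤ s.re) :
    ‖(p : ℂ) ^ (-s)‖ ≤ (√p)⁻¹ := by
  rw [Complex.norm_natCast_cpow_of_pos hp, Complex.neg_re, sqrt_eq_rpow,
    ← rpow_neg (by positivity)]
  exact rpow_le_rpow_of_exponent_le (by exact_mod_cast hp) (by linarith)

lemma norm_log_one_sub_natCast_cpow_neg_le {p : ℕ} (hp : 2 ≤ p) {s : ℂ} (hs : 1 / 2 ≤ s.re) :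
    ‖Complex.log (1 - (p : ℂ) ^ (-s))‖ ≤ 3 * (√p)⁻¹ := by
  have hw := norm_natCast_cpow_neg_le_inv_sqrt (p := p) (by omega) hs
  have hsqrt : (√p)⁻¹ ≤ 4 / 5 := by
    rw [inv_le_comm₀ (by positivity) (by norm_num), le_sqrt (by norm_num) (by positivity)]
    have : (2 : ℝ) ≤ p := by exact_mod_cast hp
    linarith
  calc _ ≤ 3 * ‖(p : ℂ) ^ (-s)‖ := Complex.norm_log_one_sub_le_three_mul (hw.trans hsqrt)
    _ ≤ 3 * (√p)⁻¹ := by gcongr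

lemma inv_sqrt_add_one_le_two_mul_sqrt_sub_sqrt {x : ℝ} (hx : 0 ≤ x) :
    (√(x + 1))⁻¹ ≤ 2 * (√(x + 1) - √x) := by
  have h1 : 0 < √(x + 1) := sqrt_pos.mpr (by linarith)
  rw [inv_le_iff_one_le_mul₀ h1]
  nlinarith [sq_nonneg (√(x + 1) - √x), sq_sqrt hx, sq_sqrt (by linarith : 0 ≤ x + 1)]

-- The `n = 0` term is `(√0)⁻¹ = 0`.
lemma sum_range_succ_inv_sqrt_le (m : ℕ) : ∑ n ∈ range (m + 1), (√n)⁻¹ ≤ 2 * √m := by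
  induction m with
  | zero => simp
  | succ m ih =>
    rw [sum_range_succ]
    have := inv_sqrt_add_one_le_two_mul_sqrt_sub_sqrt m.cast_nonneg
    push_cast at this ⊢
    linarith

lemma sum_filter_le_inv_sqrt_le (S : Finset ℕ) {T : ℝ} (hT : 0 ≤ T) :
    ∑ n ∈ S.filter (fun n : ℕ => (n : ℝ) ≤ T), (√n)⁻¹ ≤ 2 * √T := calc
  _ ≤ ∑ n ∈ range (⌊T⌋₊ + 1), (√n)⁻¹ := by
    refine sum_le_sum_of_subset_of_nonneg (fun n hn => ?_) (fun _ _ _ => by positivity)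
    exact mem_range.mpr (Nat.lt_succ_of_le (Nat.le_floor (mem_filter.mp hn).2))
  _ ≤ 2 * √⌊T⌋₊ := sum_range_succ_inv_sqrt_le _
  _ ≤ 2 * √T := by gcongr; exact Nat.floor_le hT

lemma card_primeFactors_filter_lt_mul_log_le {q : ℕ} (hq : q ≠ 0) {T : ℝ} (hT : 0 < T) :
    #(q.primeFactors.filter (fun p : ℕ => T < p)) * log T ≤ log q := by
  set F := q.primeFactors.filter (fun p : ℕ => T < p)
  have hprod : T ^ #F ≤ ∏ p ∈ F, (p : ℝ) := by
    rw [← prod_const]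
    exact prod_le_prod (fun _ _ => hT.le) (fun p hp => (mem_filter.mp hp).2.le)
  have hdvd : ∏ p ∈ F, p ∣ q :=
    (prod_dvd_prod_of_subset F q.primeFactors id (filter_subset _ _)).trans q.prod_primeFactors_dvd
  have hq' : (∏ p ∈ F, (p : ℝ)) ≤ q := by
    rw [← Nat.cast_prod]
    exact_mod_cast Nat.le_of_dvd (Nat.pos_of_ne_zero hq) hdvd
  rw [← log_pow]
  exact log_le_log (by positivity) (hprod.trans hq')

lemma sum_primeFactors_inv_sqrt_le {q : ℕ} (hq : q ≠ 0) {T : ℝ} (hT : 1 < T) :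
    ∑ p ∈ q.primeFactors, (√p)⁻¹ ≤ 2 * √T + log q / (log T * √T) := by
  have hlogT : 0 < log T := log_pos hT
  have hsqrtT : 0 < √T := sqrt_pos.mpr (by linarith)
  rw [← sum_filter_add_sum_filter_not _ (fun p : ℕ => (p : ℝ) ≤ T)]
  gcongr
  · exact sum_filter_le_inv_sqrt_le _ (by linarith)
  · have hterm : ∀ p ∈ q.primeFactors.filter (fun p : ℕ => ¬(p : ℝ) ≤ T), (√p)⁻¹ ≤ (√T)⁻¹ :=
      fun p hp => inv_anti₀ hsqrtT (sqrt_le_sqrt (not_le.mp (mem_filter.mp hp).2).le)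
    have hcard := card_primeFactors_filter_lt_mul_log_le hq (by linarith : 0 < T)
    simp only [not_le] at hterm ⊢
    calc _ ≤ #(q.primeFactors.filter (fun p : ℕ => T < p)) * (√T)⁻¹ := by
          simpa using sum_le_card_nsmul _ _ _ hterm
      _ ≤ log q / (log T * √T) := by
          rw [le_div_iff₀ (by positivity)]
          calc _ = #(q.primeFactors.filter (fun p : ℕ => T < p)) * log T * ((√T)⁻¹ * √T) := by
                ring
            _ ≤ log q := by rwa [inv_mul_cancel₀ hsqrtT.ne', mul_one]

theorem stmt8 :
    ∃ C : ℝ, 0 < C ∧ ∀ q : ℕ, 16 ≤ q → ∀ s : ℂ, (1/2 : ℝ) ≤ s.re →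
      ∑ p ∈ q.primeFactors, ‖Complex.log (1 - (p : ℂ) ^ (-s))‖
        ≤ C * (Real.sqrt (Real.log q / Real.log (Real.log q)) + Real.log (Real.log q)) := by
  refine ⟨12, by norm_num, fun q hq s hs => ?_⟩
  set L := log q
  set l := log L
  have hL : 1 < L := by
    rw [lt_log_iff_exp_lt (by positivity)]
    have : (16 : ℝ) ≤ q := by exact_mod_cast hq
    linarith [exp_one_lt_d9]
  have hl : 0 < l := log_pos hL
  have hlL : l < L := by linarith [log_le_sub_one_of_pos (by linarith : 0 < L)]
  have hT : 1 < L / l := (one_lt_div hl).mpr hlL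
  have hlogT : l / 2 ≤ log (L / l) := by
    rw [log_div (by linarith) hl.ne']
    linarith [log_le_half_self hl]
  calc ∑ p ∈ q.primeFactors, ‖Complex.log (1 - (p : ℂ) ^ (-s))‖
      ≤ ∑ p ∈ q.primeFactors, 3 * (√p)⁻¹ := sum_le_sum fun p hp =>
        norm_log_one_sub_natCast_cpow_neg_le (Nat.prime_of_mem_primeFactors hp).two_le hs
    _ ≤ 3 * (2 * √(L / l) + L / (log (L / l) * √(L / l))) := by
        rw [← mul_sum]; gcongr; exact sum_primeFactors_inv_sqrt_le (by omega) hT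
    _ ≤ 3 * (2 * √(L / l) + L / (l / 2 * √(L / l))) := by gcongr
    _ = 12 * √(L / l) := by
        rw [show L / (l / 2 * √(L / l)) = 2 * (L / l / √(L / l)) by field_simp, div_sqrt]; ring
    _ ≤ 12 * (√(L / l) + l) := by linarith
end

section
/- Let x = Re(z) ≥ 0, y = Im(z), h > 0, Δ ≥ 1, with |z| ≥ max{2h, 1}. Then ∑_{n=0}^{∞} 1/((Δ(z+h)+n)²·(Δ(z+h)+n+1)²) ≤ 1/(Δ(x+h+|y|))³ up to an absolute multiplicative constant, and in particular this sum is O(1/(Δ|z|)³). -/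
/-!
With `w = Δ (z + h)` and `s = Re w + |Im w| = Δ (x + h + |y|)`, every shift `w + t` (`t ≥ 0`) has
`‖w + t‖ ≥ (s + t) / √2`, because `Re (w + t) ≥ 0`. Hence the `n`-th term is at most
`4 / ((s + n)² (s + n + 1)²) ≤ (4 / s²) (1 / (s + n) - 1 / (s + n + 1))`, and the telescoping sum
gives the bound `4 / s³`. Finally `Δ ‖z‖ ≤ s` since `‖z‖ ≤ x + |y|`.
-/

open Filter Topology

theorem Complex.sq_abs_re_add_abs_im_le (w : ℂ) : (|w.re| + |w.im|) ^ 2 ≤ 2 * ‖w‖ ^ 2 := by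
  rw [Complex.sq_norm, Complex.normSq_apply, ← abs_mul_self w.re, ← abs_mul_self w.im,
    abs_mul, abs_mul]
  nlinarith [sq_nonneg (|w.re| - |w.im|)]

theorem hasSum_sub_succ_of_antitone {f : ℕ → ℝ} {l : ℝ} (hf : Antitone f)
    (hl : Tendsto f atTop (𝓝 l)) : HasSum (fun n ↦ f n - f (n + 1)) (f 0 - l) := by
  rw [hasSum_iff_tendsto_nat_of_nonneg fun n ↦ sub_nonneg.2 (hf n.le_succ)]
  simp only [Finset.sum_range_sub']
  exact tendsto_const_nhds.sub hl

theorem hasSum_inv_add_nat_sub_inv_add_nat_add_one {s : ℝ} (hs : 0 < s) :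
    HasSum (fun n : ℕ ↦ (s + n)⁻¹ - (s + n + 1)⁻¹) s⁻¹ := by
  have hanti : Antitone fun n : ℕ ↦ (s + n)⁻¹ := fun m n hmn ↦
    inv_anti₀ (by positivity) (by gcongr)
  have hlim : Tendsto (fun n : ℕ ↦ (s + n)⁻¹) atTop (𝓝 0) :=
    (tendsto_atTop_add_const_left _ s tendsto_natCast_atTop_atTop).inv_tendsto_atTop
  simpa [add_assoc] using hasSum_sub_succ_of_antitone hanti hlim

theorem norm_one_div_sq_mul_sq_le {a b : ℂ} {A B : ℝ} (hA : 0 < A) (hB : 0 < B)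
    (ha : A ^ 2 ≤ 2 * ‖a‖ ^ 2) (hb : B ^ 2 ≤ 2 * ‖b‖ ^ 2) :
    ‖1 / (a ^ 2 * b ^ 2)‖ ≤ 4 / (A ^ 2 * B ^ 2) := by
  rw [norm_div, norm_one, norm_mul, norm_pow, norm_pow,
    div_le_div_iff₀ (by nlinarith [pow_pos hA 2, pow_pos hB 2]) (by positivity)]
  nlinarith [mul_le_mul ha hb (sq_nonneg B) (by positivity)]

section ShiftedTerms

variable {w : ℂ} (hw : 0 ≤ w.re)
include hw

theorem sq_re_add_abs_im_add_le {t : ℝ} (ht : 0 ≤ t) :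
    (w.re + |w.im| + t) ^ 2 ≤ 2 * ‖w + t‖ ^ 2 := by
  have := Complex.sq_abs_re_add_abs_im_le (w + t)
  rwa [Complex.add_re, Complex.ofReal_re, Complex.add_im, Complex.ofReal_im, add_zero,
    abs_of_nonneg (add_nonneg hw ht), add_right_comm] at this

theorem norm_one_div_sq_mul_sq_le_inv_sub_inv (hs : 0 < w.re + |w.im|) (n : ℕ) :
    ‖1 / ((w + n) ^ 2 * (w + n + 1) ^ 2)‖ ≤
      4 / (w.re + |w.im|) ^ 2 * ((w.re + |w.im| + n)⁻¹ - (w.re + |w.im| + n + 1)⁻¹) := by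
  set s := w.re + |w.im|
  have hn : (0 : ℝ) ≤ n := n.cast_nonneg
  have ha : (s + n) ^ 2 ≤ 2 * ‖w + n‖ ^ 2 := by
    exact_mod_cast sq_re_add_abs_im_add_le hw hn
  have hb : (s + n + 1) ^ 2 ≤ 2 * ‖w + n + 1‖ ^ 2 := by
    have := sq_re_add_abs_im_add_le hw (t := n + 1) (by positivity)
    rwa [Complex.ofReal_add, Complex.ofReal_natCast, Complex.ofReal_one, ← add_assoc,
      ← add_assoc] at this
  have hsn : s ≤ s + n := le_add_of_nonneg_right hn
  calc ‖1 / ((w + n) ^ 2 * (w + n + 1) ^ 2)‖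
      ≤ 4 / ((s + n) ^ 2 * (s + n + 1) ^ 2) :=
        norm_one_div_sq_mul_sq_le (by positivity) (by positivity) ha hb
    _ = 4 / ((s + n) * (s + n + 1) * ((s + n) * (s + n + 1))) := by ring
    _ ≤ 4 / (s * s * ((s + n) * (s + n + 1))) := by gcongr; linarith
    _ = 4 / s ^ 2 * ((s + n)⁻¹ - (s + n + 1)⁻¹) := by field_simp; ring

theorem norm_tsum_one_div_sq_mul_sq_le (hs : 0 < w.re + |w.im|) :
    ‖∑' n : ℕ, 1 / ((w + n) ^ 2 * (w + n + 1) ^ 2)‖ ≤ 4 / (w.re + |w.im|) ^ 3 := by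
  have := tsum_of_norm_bounded ((hasSum_inv_add_nat_sub_inv_add_nat_add_one hs).mul_left _)
    (norm_one_div_sq_mul_sq_le_inv_sub_inv hw hs)
  rwa [div_mul_eq_mul_div, ← div_eq_mul_inv, div_div, ← pow_succ'] at this

end ShiftedTerms

theorem stmt14 :
    ∃ C : ℝ, 0 < C ∧ ∀ (z : ℂ) (h Δ : ℝ), 0 ≤ z.re → 0 < h → 1 ≤ Δ →
      max (2 * h) 1 ≤ ‖z‖ →
      ‖∑' n : ℕ, 1 / ((Δ * (z + h) + n)^2 * (Δ * (z + h) + n + 1)^2)‖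
          ≤ C / (Δ * (z.re + h + |z.im|))^3 ∧
      ‖∑' n : ℕ, 1 / ((Δ * (z + h) + n)^2 * (Δ * (z + h) + n + 1)^2)‖
          ≤ C / (Δ * ‖z‖)^3 := by
  refine ⟨4, four_pos, fun z h Δ hx hh hΔ hz ↦ ?_⟩
  have hΔ0 : 0 < Δ := one_pos.trans_le hΔ
  have hre : (Δ * (z + h) : ℂ).re = Δ * (z.re + h) := by simp
  have him : (Δ * (z + h) : ℂ).im = Δ * z.im := by simp
  have hs : (Δ * (z + h) : ℂ).re + |(Δ * (z + h) : ℂ).im| = Δ * (z.re + h + |z.im|) := by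
    rw [hre, him, abs_mul, abs_of_pos hΔ0]
    ring
  have hbound := norm_tsum_one_div_sq_mul_sq_le (w := Δ * (z + h)) (by rw [hre]; positivity)
    (by rw [hs]; positivity)
  rw [hs] at hbound
  refine ⟨hbound, hbound.trans (div_le_div_of_nonneg_left four_pos.le ?_ ?_)⟩
  · exact pow_pos (mul_pos hΔ0 ((one_pos.trans_le (le_max_right _ _)).trans_le hz)) 3
  · have := Complex.norm_le_abs_re_add_abs_im z
    rw [abs_of_nonneg hx] at this
    gcongr
    linarith
end
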